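/- arXiv:2201.12054 — 2 statements merged into one kernel-verified Lean document; each statement's English description precedes it below -/
import Mathlib

section
/- Let k : [a,b] → ℝ be continuous and define η'' : [a,b] → ℝ by η''(z) = ∫_a^b G''_t(z) · k(t) dt. Then for every function f : ℝ → ℝ that is twice continuously differentiable on [a,b] and satisfies f(a) = f(b) = 0, one has ∫_a^b η''(z) · f''(z) dz = ∫_a^b k(t) · f(t) dt. That is, the function with second derivative η'' represents the integral functional f ↦ ∫_a^b k(t) f(t) dt with respect to the inner product ⟨u, v⟩ = ∫_a^b u''(z) v''(z) dz. -/
open Set intervalIntegral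

/-- The second derivative of the reproducing kernel of the space
`W = {f : f(a)=f(b)=0, f'' ∈ L²}`:
`G''_y(z) = (z−a)(y−b)/(b−a)` for `z < y` and `(y−a)(z−b)/(b−a)` for `y ≤ z`. -/
noncomputable def Gpp (a b y z : ℝ) : ℝ :=
  if z < y then (z - a) * (y - b) / (b - a) else (y - a) * (z - b) / (b - a)

/-!
Split `∫_a^b G''_t(z) f''(z) dz` at `z = t`. On each piece `G''_t` is affine in `z` and vanishes at
the outer endpoint, so one integration by parts, `∫ (z - c) f'' = [(z - c) f' - f]`, together with
`f(a) = f(b) = 0`, gives `∫_a^b G''_t f'' = f(t)`: the `f'(t)` terms of the two pieces cancel. The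
theorem follows by exchanging the order of integration, which is legitimate because `G''` is jointly
continuous.
-/

lemma intervalIntegral_intervalIntegral_swap_of_continuousOn {E : Type*} [NormedAddCommGroup E]
    [NormedSpace ℝ E] {F : ℝ → ℝ → E} {a b c d : ℝ}
    (hF : ContinuousOn (Function.uncurry F) (uIcc a b ×ˢ uIcc c d)) :
    ∫ x in a..b, ∫ y in c..d, F x y = ∫ y in c..d, ∫ x in a..b, F x y :=
  MeasureTheory.intervalIntegral_intervalIntegral_swap <|
    (hF.integrableOn_compact (isCompact_uIcc.prod isCompact_uIcc)).mono_set
      (prod_mono uIoc_subset_uIcc uIoc_subset_uIcc)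

lemma integral_sub_mul_second_deriv {f f' f'' : ℝ → ℝ} {u v : ℝ} (huv : u ≤ v)
    (hf' : ∀ t ∈ Icc u v, HasDerivWithinAt f (f' t) (Icc u v) t)
    (hf'' : ∀ t ∈ Icc u v, HasDerivWithinAt f' (f'' t) (Icc u v) t)
    (hcont : ContinuousOn f'' (Icc u v)) (c : ℝ) :
    ∫ z in u..v, (z - c) * f'' z = ((v - c) * f' v - f v) - ((u - c) * f' u - f u) := by
  have hF : ∀ t ∈ Icc u v,
      HasDerivWithinAt (fun z => (z - c) * f' z - f z) ((t - c) * f'' t) (Icc u v) t := by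
    intro t ht
    exact ((((hasDerivWithinAt_id t _).sub_const c).mul (hf'' t ht)).sub (hf' t ht)).congr_deriv
      (by simp only [id_eq]; ring)
  refine integral_eq_sub_of_hasDerivAt_of_le huv (fun t ht => (hF t ht).continuousWithinAt)
    (fun t ht => (hF t (Ioo_subset_Icc_self ht)).hasDerivAt (Icc_mem_nhds ht.1 ht.2)) ?_
  exact ((continuous_id.sub continuous_const).continuousOn.mul hcont).intervalIntegrable_of_Icc huv

namespace Gpp

variable {a b y z : ℝ}

lemma of_le (h : z ≤ y) : Gpp a b y z = (z - a) * (y - b) / (b - a) := by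
  rcases h.lt_or_eq with h | rfl
  · exact if_pos h
  · simp [Gpp]

lemma of_ge (h : y ≤ z) : Gpp a b y z = (y - a) * (z - b) / (b - a) :=
  if_neg h.not_gt

lemma continuous_uncurry (a b : ℝ) : Continuous (Function.uncurry (Gpp a b)) := by
  have h : Function.uncurry (Gpp a b) = fun p => if p.1 ≤ p.2
      then (p.1 - a) * (p.2 - b) / (b - a) else (p.2 - a) * (p.1 - b) / (b - a) := by
    funext p
    split_ifs with hp
    · exact of_ge hp
    · exact of_le (not_le.1 hp).le
  rw [h]
  exact Continuous.if_le (by fun_prop) (by fun_prop) continuous_fst continuous_snd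
    fun p hp => by rw [hp]

lemma integral_mul_second_deriv (hab : a < b) {f f' f'' : ℝ → ℝ}
    (hf' : ∀ t ∈ Icc a b, HasDerivWithinAt f (f' t) (Icc a b) t)
    (hf'' : ∀ t ∈ Icc a b, HasDerivWithinAt f' (f'' t) (Icc a b) t)
    (hcont : ContinuousOn f'' (Icc a b)) (ha : f a = 0) (hb : f b = 0)
    {t : ℝ} (ht : t ∈ Icc a b) :
    ∫ z in a..b, Gpp a b t z * f'' z = f t := by
  have hint : IntervalIntegrable (fun z => Gpp a b t z * f'' z) MeasureTheory.volume a b :=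
    (((continuous_uncurry a b).comp (Continuous.prodMk_right t)).continuousOn.mul
      hcont).intervalIntegrable_of_Icc hab.le
  have hsub₁ : Icc a t ⊆ Icc a b := Icc_subset_Icc_right ht.2
  have hsub₂ : Icc t b ⊆ Icc a b := Icc_subset_Icc_left ht.1
  have left : ∫ z in a..t, Gpp a b t z * f'' z
      = (t - b) / (b - a) * ((t - a) * f' t - f t - ((a - a) * f' a - f a)) := by
    rw [← integral_sub_mul_second_deriv ht.1 (fun x hx => (hf' x (hsub₁ hx)).mono hsub₁)
      (fun x hx => (hf'' x (hsub₁ hx)).mono hsub₁) (hcont.mono hsub₁), ← integral_const_mul]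
    refine integral_congr fun z hz => ?_
    rw [uIcc_of_le ht.1] at hz
    rw [of_le hz.2]
    ring
  have right : ∫ z in t..b, Gpp a b t z * f'' z
      = (t - a) / (b - a) * ((b - b) * f' b - f b - ((t - b) * f' t - f t)) := by
    rw [← integral_sub_mul_second_deriv ht.2 (fun x hx => (hf' x (hsub₂ hx)).mono hsub₂)
      (fun x hx => (hf'' x (hsub₂ hx)).mono hsub₂) (hcont.mono hsub₂), ← integral_const_mul]
    refine integral_congr fun z hz => ?_
    rw [uIcc_of_le ht.2] at hz
    rw [of_ge hz.1]
    ring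
  have ht' : t ∈ uIcc a b := Icc_subset_uIcc ht
  rw [← integral_add_adjacent_intervals (hint.mono_set (uIcc_subset_uIcc_left ht'))
    (hint.mono_set (uIcc_subset_uIcc_right ht')), left, right, ha, hb]
  field_simp [(sub_pos.2 hab).ne']
  ring

end Gpp

/-- If `k` is continuous on `[a,b]` and
`η''(z) = ∫_a^b G''_t(z) k(t) dt`, then for every `f` twice continuously
differentiable on `[a,b]` with `f(a) = f(b) = 0` one has
`∫_a^b η''(z) f''(z) dz = ∫_a^b k(t) f(t) dt`:  the function with second
derivative `η''` is the Riesz representer of the functional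
`f ↦ ∫_a^b k(t) f(t) dt` for the inner product `⟨u,v⟩ = ∫_a^b u'' v''`. -/
theorem stmt3 {a b : ℝ} (hab : a < b) (k : ℝ → ℝ) (hk : ContinuousOn k (Set.Icc a b))
    (η'' : ℝ → ℝ) (hη'' : ∀ z, η'' z = ∫ t in a..b, Gpp a b t z * k t)
    (f f' f'' : ℝ → ℝ)
    (hf' : ∀ t ∈ Set.Icc a b, HasDerivWithinAt f (f' t) (Set.Icc a b) t)
    (hf'' : ∀ t ∈ Set.Icc a b, HasDerivWithinAt f' (f'' t) (Set.Icc a b) t)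
    (hcont : ContinuousOn f'' (Set.Icc a b))
    (ha : f a = 0) (hb : f b = 0) :
    ∫ z in a..b, η'' z * f'' z = ∫ t in a..b, k t * f t := by
  have hkernel : ContinuousOn (fun p : ℝ × ℝ => Gpp a b p.2 p.1 * k p.2 * f'' p.1)
      (uIcc a b ×ˢ uIcc a b) := by
    rw [uIcc_of_le hab.le]
    exact (((Gpp.continuous_uncurry a b).comp continuous_swap).continuousOn.mul
      (hk.comp continuous_snd.continuousOn fun p hp => hp.2)).mul
      (hcont.comp continuous_fst.continuousOn fun p hp => hp.1)
  calc ∫ z in a..b, η'' z * f'' z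
      = ∫ z in a..b, ∫ t in a..b, Gpp a b t z * k t * f'' z := by
        simp_rw [hη'', integral_mul_const]
    _ = ∫ t in a..b, ∫ z in a..b, Gpp a b t z * k t * f'' z :=
        intervalIntegral_intervalIntegral_swap_of_continuousOn hkernel
    _ = ∫ t in a..b, k t * f t := by
        refine integral_congr fun t ht => ?_
        rw [uIcc_of_le hab.le] at ht
        simp_rw [mul_right_comm _ (k t)]
        rw [integral_mul_const, Gpp.integral_mul_second_deriv hab hf' hf'' hcont ha hb ht,
          mul_comm]
end

section
/- For every g ∈ ℝ^N, the set M of least-squares solutions M = {f ∈ H : ‖K f − g‖₂ ≤ ‖K h − g‖₂ for all h ∈ H} is nonempty, there is a unique element f† ∈ M of minimal norm (i.e., ‖f†‖ ≤ ‖f‖ for every f ∈ M), and this minimal-norm solution is a linear combination of the Riesz representers: there exist coefficients c_1, …, c_N ∈ ℝ with f† = Σ_{j=1}^N c_j · η_j. -/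
open RealInnerProductSpace

/-!
Least-squares solutions are exactly the solutions of `K f = p`, where `p` is the orthogonal
projection of `g` onto the (finite-dimensional) range of `K`. Since `ker K` is the orthogonal
complement of `S = span {η_j}`, projecting any such solution onto `S` stays in this fibre, and
Pythagoras gives `‖f‖² = ‖f†‖² + ‖f - f†‖²` for every `f` in the fibre: the projection is the
unique solution of minimal norm, and it lies in `S`.
-/

section

variable {E F : Type*} [NormedAddCommGroup E] [InnerProductSpace ℝ E]
  [NormedAddCommGroup F] [InnerProductSpace ℝ F]

namespace Submodule

variable (S : Submodule ℝ E) {u v : E}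

theorem norm_sq_eq_add_of_sub_mem_orthogonal (hu : u ∈ S) (hv : v - u ∈ Sᗮ) :
    ‖v‖ ^ 2 = ‖u‖ ^ 2 + ‖v - u‖ ^ 2 := by
  simpa [sq] using norm_add_sq_eq_norm_sq_add_norm_sq_real (S.inner_right_of_mem_orthogonal hu hv)

theorem norm_le_of_sub_mem_orthogonal (hu : u ∈ S) (hv : v - u ∈ Sᗮ) : ‖u‖ ≤ ‖v‖ := by
  have := S.norm_sq_eq_add_of_sub_mem_orthogonal hu hv
  nlinarith [norm_nonneg u, norm_nonneg v, sq_nonneg ‖v - u‖]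

theorem eq_of_sub_mem_orthogonal_of_norm_le (hu : u ∈ S) (hv : v - u ∈ Sᗮ) (h : ‖v‖ ≤ ‖u‖) :
    v = u := by
  have := S.norm_sq_eq_add_of_sub_mem_orthogonal hu hv
  have : ‖v - u‖ = 0 := by nlinarith [norm_nonneg u, norm_nonneg v, norm_nonneg (v - u)]
  exact sub_eq_zero.mp (norm_eq_zero.mp this)

theorem norm_sub_sq_eq_add_starProjection [S.HasOrthogonalProjection] {y : E} (hy : y ∈ S)
    (g : E) : ‖y - g‖ ^ 2 = ‖y - S.starProjection g‖ ^ 2 + ‖S.starProjection g - g‖ ^ 2 := by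
  have hv : (y - g) - (y - S.starProjection g) ∈ Sᗮ := by
    simpa [neg_sub] using Sᗮ.neg_mem (S.sub_starProjection_mem_orthogonal g)
  simpa using
    S.norm_sq_eq_add_of_sub_mem_orthogonal (S.sub_mem hy (S.starProjection_apply_mem g)) hv

end Submodule

namespace LinearMap

variable (K : E →ₗ[ℝ] F)

theorem forall_norm_sub_le_iff [(range K).HasOrthogonalProjection] (g : F) (f : E) :
    (∀ h, ‖K f - g‖ ≤ ‖K h - g‖) ↔ K f = (range K).starProjection g := by
  set p := (range K).starProjection g
  have hpyth (h : E) := (range K).norm_sub_sq_eq_add_starProjection (mem_range_self K h) g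
  constructor
  · intro hmin
    obtain ⟨f₀, hf₀⟩ : p ∈ range K := (range K).starProjection_apply_mem g
    have hle : ‖K f - g‖ ≤ ‖p - g‖ := hf₀ ▸ hmin f₀
    have : ‖K f - p‖ = 0 := by
      nlinarith [hpyth f, norm_nonneg (K f - p), norm_nonneg (K f - g), norm_nonneg (p - g)]
    exact sub_eq_zero.mp (norm_eq_zero.mp this)
  · intro hf h
    rw [hf]
    nlinarith [hpyth h, norm_nonneg (K h - g), norm_nonneg (p - g)]

theorem map_starProjection_of_ker_eq_orthogonal {S : Submodule ℝ E} [S.HasOrthogonalProjection]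
    (hS : ker K = Sᗮ) (f : E) : K (S.starProjection f) = K f :=
  (sub_mem_ker_iff.mp (hS ▸ S.sub_starProjection_mem_orthogonal f)).symm

theorem ker_eq_orthogonal_span_range {ι : Type*} [Fintype ι] (K : E →ₗ[ℝ] EuclideanSpace ℝ ι)
    {η : ι → E} (hη : ∀ f j, K f j = ⟪η j, f⟫) :
    ker K = (Submodule.span ℝ (Set.range η))ᗮ := by
  ext f
  rw [Submodule.span_range_eq_iSup, ← Submodule.iInf_orthogonal, Submodule.mem_iInf]
  simp only [Submodule.mem_orthogonal_singleton_iff_inner_right, ← hη, mem_ker]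
  exact PiLp.ext_iff

end LinearMap
end

theorem stmt7_general {H : Type*} [NormedAddCommGroup H] [InnerProductSpace ℝ H]
    {N : ℕ} (K : H →L[ℝ] EuclideanSpace ℝ (Fin N))
    (η : Fin N → H) (hη : ∀ (f : H) (j : Fin N), K f j = ⟪η j, f⟫)
    (g : EuclideanSpace ℝ (Fin N))
    (M : Set H) (hM : M = {f : H | ∀ h : H, ‖K f - g‖ ≤ ‖K h - g‖}) :
    M.Nonempty ∧
    ∃ fdag ∈ M,
      (∀ f ∈ M, ‖fdag‖ ≤ ‖f‖) ∧
      (∀ f ∈ M, (∀ h ∈ M, ‖f‖ ≤ ‖h‖) → f = fdag) ∧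
      ∃ c : Fin N → ℝ, fdag = ∑ j, c j • η j := by
  set L := K.toLinearMap
  set S := Submodule.span ℝ (Set.range η)
  have : FiniteDimensional ℝ S := .span_of_finite ℝ (Set.finite_range η)
  set p := (LinearMap.range L).starProjection g
  have hMp (f : H) : f ∈ M ↔ K f = p := hM ▸ L.forall_norm_sub_le_iff g f
  have hker : LinearMap.ker L = Sᗮ := L.ker_eq_orthogonal_span_range hη
  obtain ⟨f₀, hf₀⟩ : p ∈ LinearMap.range L := Submodule.starProjection_apply_mem _ g
  set fdag := S.starProjection f₀
  have hfdagS : fdag ∈ S := S.starProjection_apply_mem f₀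
  have hfdagM : fdag ∈ M :=
    (hMp fdag).2 (hf₀ ▸ L.map_starProjection_of_ker_eq_orthogonal hker f₀)
  have horth {f : H} (hf : f ∈ M) : f - fdag ∈ Sᗮ :=
    hker ▸ LinearMap.sub_mem_ker_iff.mpr (((hMp f).1 hf).trans ((hMp fdag).1 hfdagM).symm)
  refine ⟨⟨f₀, (hMp f₀).2 hf₀⟩, fdag, hfdagM,
    fun f hf ↦ S.norm_le_of_sub_mem_orthogonal hfdagS (horth hf),
    fun f hf hmin ↦ S.eq_of_sub_mem_orthogonal_of_norm_le hfdagS (horth hf) (hmin fdag hfdagM), ?_⟩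
  obtain ⟨c, hc⟩ := (Submodule.mem_span_range_iff_exists_fun ℝ).mp hfdagS
  exact ⟨c, hc.symm⟩

/-- For every data vector `g ∈ ℝ^N`, the set `M` of least-squares
solutions of `K f = g` is nonempty, contains a unique element `f†` of minimal norm,
and this minimal-norm solution is a linear combination of the Riesz representers:
`f† = Σ_j c_j • η_j` for some coefficients `c ∈ ℝ^N`. -/
theorem stmt7 {H : Type*} [NormedAddCommGroup H] [InnerProductSpace ℝ H] [CompleteSpace H]
    {N : ℕ} (hN : 0 < N) (K : H →L[ℝ] EuclideanSpace ℝ (Fin N))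
    (η : Fin N → H) (hη : ∀ (f : H) (j : Fin N), K f j = ⟪η j, f⟫)
    (g : EuclideanSpace ℝ (Fin N))
    (M : Set H) (hM : M = {f : H | ∀ h : H, ‖K f - g‖ ≤ ‖K h - g‖}) :
    M.Nonempty ∧
    ∃ fdag ∈ M,
      (∀ f ∈ M, ‖fdag‖ ≤ ‖f‖) ∧
      (∀ f ∈ M, (∀ h ∈ M, ‖f‖ ≤ ‖h‖) → f = fdag) ∧
      ∃ c : Fin N → ℝ, fdag = ∑ j, c j • η j :=
  stmt7_general K η hη g M hM
end
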